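/- Canonical representative of nearby homotopy classes (Lemma GammaTop3): Let U ⊆ ℂ be open and let γ be an admissible path in U with z₀ = γ(0) and z₁ = γ(1), z₀ ≠ z₁. Then there exists ε > 0 with ε < dist(γ([0,1]), ℂ∖U) and ε < |z₀ − z₁| such that: for every admissible path γ̃ in U with d(γ, γ̃) < ε, every continuous δ : [0,1] → B(z₀,ε) with δ(0) = γ̃(0) and δ(1) = z₀, and every homeomorphism ψ : U → U that equals the identity outside B(z₁,ε) and satisfies ψ(z₁) = γ̃(1), the concatenation δ·(ψ∘γ) is an admissible path in U and is 𝒢-homotopic to γ̃. -/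

import Mathlib

/-!
Pull everything back by `ψ`: the path `β = ψ⁻¹ ∘ γ'` stays within `3ε` of `γ`, ends at `z₁` and
avoids `z₁` before, while `ψ` fixes `δ` and maps `U` to itself. So it suffices to deform `δ · γ`
into `β` and push the homotopy forward by `ψ`.

Write `β t - z₁ = (γ t - z₁) * exp (D t)` with a continuous logarithm `D` on `[0,1)`. Away from
the end, `‖β t - γ t‖ < ‖γ t - z₁‖`, so `D` is the principal logarithm, `|Im D| < π / 2`, and
every convex combination of the straight-line homotopy and the spiral
`z₁ + (γ t - z₁) * exp (v * D t)` lies in the half-plane on the side of `γ t`, so it avoids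
`z₁`. Near the end only the spiral avoids `z₁`; it stays in `U` because it is no farther from
`z₁` than `γ t` and `β t`. Near the start only the straight line moves the start point along
the segment from `z₀` to `β 0`. A cutoff blends the two into a homotopy from `γ` to `β`.
Contracting `δ` to `β 0` inside `B(z₀, ε)` supplies the first half of the homotopy from
`δ · γ`, and a reparametrisation of `β` finishes it.
-/

open Set

/-- A path in `U` parametrized by `[0,1]` is admissible if it is continuous, takes values
in `U`, and hits its endpoint only at time `1`. -/
def IsAdmissible (U : Set ℂ) (γ : ℝ → ℂ) : Prop :=
  ContinuousOn γ (Set.Icc 0 1) ∧ (∀ s ∈ Set.Icc (0:ℝ) 1, γ s ∈ U) ∧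
    ∀ s ∈ Set.Ico (0:ℝ) 1, γ s ≠ γ 1

/-- Two admissible paths with the same endpoints are 𝒢-homotopic: there is a homotopy
in `U` fixing the endpoints and avoiding the common endpoint `γ 1` at all times `s < 1`. -/
def GHomotopic (U : Set ℂ) (γ γ' : ℝ → ℂ) : Prop :=
  ∃ H : ℝ → ℝ → ℂ,
    ContinuousOn (fun p : ℝ × ℝ => H p.1 p.2) (Set.Icc 0 1 ×ˢ Set.Icc 0 1) ∧
    (∀ s ∈ Set.Icc (0:ℝ) 1, ∀ u ∈ Set.Icc (0:ℝ) 1, H s u ∈ U) ∧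
    (∀ s ∈ Set.Icc (0:ℝ) 1, H s 0 = γ s) ∧
    (∀ s ∈ Set.Icc (0:ℝ) 1, H s 1 = γ' s) ∧
    (∀ u ∈ Set.Icc (0:ℝ) 1, H 0 u = γ 0) ∧
    (∀ u ∈ Set.Icc (0:ℝ) 1, H 1 u = γ 1) ∧
    (∀ s ∈ Set.Ico (0:ℝ) 1, ∀ u ∈ Set.Icc (0:ℝ) 1, H s u ≠ γ 1)

/-- The sup distance between two paths parametrized by `[0,1]`. -/
noncomputable def pathDist (γ γ' : ℝ → ℂ) : ℝ :=
  sSup ((fun s => ‖γ' s - γ s‖) '' Set.Icc 0 1)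

/-- Concatenation of two paths parametrized by `[0,1]`: traverse `δ`, then `γ`. -/
noncomputable def pathConcat (δ γ : ℝ → ℂ) : ℝ → ℂ :=
  fun s => if s ≤ 1/2 then δ (2*s) else γ (2*s - 1)

open Complex Metric

theorem Convex.exists_continuousOn_exp_lift {E : Type*} [NormedAddCommGroup E] [NormedSpace ℝ E]
    {s : Set E} (hs : IsOpen s) (hconv : Convex ℝ s) {f : E → ℂ} (hf : ContinuousOn f s)
    (hf0 : ∀ x ∈ s, f x ≠ 0) {a : E} (ha : a ∈ s) {e : ℂ} (he : exp e = f a) :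
    ∃ F : E → ℂ, ContinuousOn F s ∧ (∀ x ∈ s, exp (F x) = f x) ∧ F a = e := by
  classical
  have : ContractibleSpace s := hconv.contractibleSpace ⟨a, ha⟩
  have : LocallyPathConnectedSpace s := hs.locallyPathConnectedSpace
  obtain ⟨F, ⟨hFa, hF⟩, -⟩ := isCoveringMapOn_exp.existsUnique_continuousMap_lifts
    ⟨s.domRestrict f, hf.domRestrict⟩ (a₀ := ⟨a, ha⟩) he fun x => hf0 x x.2
  refine ⟨fun x => if hx : x ∈ s then F ⟨x, hx⟩ else 0, ?_, fun x hx => ?_, by simpa [ha]⟩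
  · rw [continuousOn_iff_continuous_domRestrict]
    simpa [domRestrict_def] using F.continuous
  · simpa [hx] using congrFun hF ⟨x, hx⟩

theorem Complex.eqOn_of_exp_comp_eqOn {X : Type*} [TopologicalSpace X] {s : Set X}
    (hs : IsPreconnected s) {F G : X → ℂ} (hF : ContinuousOn F s) (hG : ContinuousOn G s)
    (hexp : ∀ x ∈ s, exp (F x) = exp (G x)) {a : X} (ha : a ∈ s) (hFG : F a = G a) :
    EqOn F G s :=
  isCoveringMap_exp.eqOn_of_comp_eqOn hs hF hG (fun x hx => Subtype.ext (hexp x hx)) ha hFG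

lemma continuousWithinAt_of_norm_sub_le {X E : Type*} [TopologicalSpace X]
    [SeminormedAddCommGroup E] {f : X → E} {b : X → ℝ} {s : Set X} {x : X}
    (hb : ContinuousWithinAt b s x) (hbx : b x = 0) (hfb : ∀ y ∈ s, ‖f y - f x‖ ≤ b y) :
    ContinuousWithinAt f s x := by
  rw [ContinuousWithinAt, tendsto_iff_norm_sub_tendsto_zero]
  exact squeeze_zero' (.of_forall fun _ => norm_nonneg _)
    (eventually_nhdsWithin_of_forall hfb) (hbx ▸ hb)

@[simp] lemma pathConcat_zero (δ γ : ℝ → ℂ) : pathConcat δ γ 0 = δ 0 := by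
  simp [pathConcat]

@[simp] lemma pathConcat_one (δ γ : ℝ → ℂ) : pathConcat δ γ 1 = γ 1 := by
  norm_num [pathConcat]

lemma mapsTo_pathConcat {δ γ : ℝ → ℂ} {P : Set ℂ} (hδ : MapsTo δ (Icc 0 1) P)
    (hγ : MapsTo γ (Icc 0 1) P) : MapsTo (pathConcat δ γ) (Icc 0 1) P := by
  intro s hs
  unfold pathConcat
  split_ifs with h
  · exact hδ ⟨by linarith [hs.1], by linarith⟩
  · exact hγ ⟨by linarith, by linarith [hs.2]⟩

lemma mapsTo_pathConcat_Ico {δ γ : ℝ → ℂ} {P : Set ℂ} (hδ : MapsTo δ (Icc 0 1) P)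
    (hγ : MapsTo γ (Ico 0 1) P) : MapsTo (pathConcat δ γ) (Ico 0 1) P := by
  intro s hs
  unfold pathConcat
  split_ifs with h
  · exact hδ ⟨by linarith [hs.1], by linarith⟩
  · exact hγ ⟨by linarith, by linarith [hs.2]⟩

lemma EqOn.pathConcat {δ δ' γ γ' : ℝ → ℂ} (hδ : EqOn δ δ' (Icc 0 1)) (hγ : EqOn γ γ' (Icc 0 1)) :
    EqOn (pathConcat δ γ) (pathConcat δ' γ') (Icc 0 1) := by
  intro s hs
  unfold _root_.pathConcat
  split_ifs with h
  · exact hδ ⟨by linarith [hs.1], by linarith⟩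
  · exact hγ ⟨by linarith, by linarith [hs.2]⟩

lemma comp_pathConcat (f : ℂ → ℂ) (δ γ : ℝ → ℂ) :
    f ∘ pathConcat δ γ = pathConcat (f ∘ δ) (f ∘ γ) := by
  ext s
  simp only [Function.comp_apply, pathConcat]
  split_ifs <;> rfl

lemma continuousOn_pathConcat {X : Type*} [TopologicalSpace X] {T : Set X} {δ γ : X → ℝ → ℂ}
    (hδ : ContinuousOn (fun p : X × ℝ => δ p.1 p.2) (T ×ˢ Icc 0 1))
    (hγ : ContinuousOn (fun p : X × ℝ => γ p.1 p.2) (T ×ˢ Icc 0 1))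
    (hδγ : ∀ x ∈ T, δ x 1 = γ x 0) :
    ContinuousOn (fun p : X × ℝ => pathConcat (δ p.1) (γ p.1) p.2) (T ×ˢ Icc 0 1) := by
  have hcont : Continuous fun p : X × ℝ => p.2 := continuous_snd
  refine ContinuousOn.if (fun p hp => ?_) ?_ ?_
  · have hp2 : p.2 = 1 / 2 := frontier_le_subset_eq hcont continuous_const hp.2
    simp only [hp2]
    norm_num
    exact hδγ p.1 hp.1.1
  · rw [closure_le_eq hcont continuous_const]
    refine hδ.comp (f := fun p : X × ℝ => (p.1, 2 * p.2)) (by fun_prop)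
      fun p hp => ⟨hp.1.1, ?_, ?_⟩
    · linarith [hp.1.2.1]
    · linarith [hp.2.out]
  · refine hγ.comp (f := fun p : X × ℝ => (p.1, 2 * p.2 - 1)) (by fun_prop)
      fun p hp => ⟨hp.1.1, ?_, ?_⟩
    · have := closure_lt_subset_le continuous_const hcont (by simpa [not_le] using hp.2)
      linarith [this.out]
    · linarith [hp.1.2.2]

lemma norm_sub_le_pathDist {γ γ' : ℝ → ℂ} (hγ : ContinuousOn γ (Icc 0 1))
    (hγ' : ContinuousOn γ' (Icc 0 1)) {t : ℝ} (ht : t ∈ Icc (0 : ℝ) 1) :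
    ‖γ' t - γ t‖ ≤ pathDist γ γ' :=
  le_csSup (isCompact_Icc.bddAbove_image (hγ'.sub hγ).norm) (mem_image_of_mem _ ht)

lemma IsAdmissible.comp {U : Set ℂ} {γ : ℝ → ℂ} {ψ : ℂ → ℂ} (hγ : IsAdmissible U γ)
    (hψ : Continuous ψ) (hinj : Function.Injective ψ) (hψU : MapsTo ψ U U) :
    IsAdmissible U (ψ ∘ γ) :=
  ⟨hψ.comp_continuousOn hγ.1, fun s hs => hψU (hγ.2.1 s hs), fun s hs => hinj.ne (hγ.2.2 s hs)⟩

namespace GHomotopic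

variable {U : Set ℂ} {α β : ℝ → ℂ}

lemma isAdmissible_left (h : GHomotopic U α β) : IsAdmissible U α := by
  obtain ⟨H, hc, hU, h0, -, -, -, hne⟩ := h
  refine ⟨?_, fun s hs => h0 s hs ▸ hU s hs 0 ⟨le_rfl, zero_le_one⟩, fun s hs => ?_⟩
  · refine (hc.comp (f := fun s : ℝ => (s, (0 : ℝ))) (by fun_prop)
      fun s hs => ⟨hs, le_rfl, zero_le_one⟩).congr fun s hs => (h0 s hs).symm
  · rw [← h0 s (Ico_subset_Icc_self hs)]
    exact hne s hs 0 ⟨le_rfl, zero_le_one⟩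

lemma congr_left {α' : ℝ → ℂ} (h : GHomotopic U α β) (hα : EqOn α α' (Icc 0 1)) :
    GHomotopic U α' β := by
  obtain ⟨H, hc, hU, h0, h1, hs0, hs1, hne⟩ := h
  have h0' : α 0 = α' 0 := hα ⟨le_rfl, zero_le_one⟩
  have h1' : α 1 = α' 1 := hα ⟨zero_le_one, le_rfl⟩
  exact ⟨H, hc, hU, fun s hs => (h0 s hs).trans (hα hs), h1, by simpa [h0'] using hs0,
    by simpa [h1'] using hs1, by simpa [h1'] using hne⟩

lemma map {ψ : ℂ → ℂ} (hψ : Continuous ψ) (hinj : Function.Injective ψ) (hψU : MapsTo ψ U U)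
    (h : GHomotopic U α β) : GHomotopic U (ψ ∘ α) (ψ ∘ β) := by
  obtain ⟨H, hc, hU, h0, h1, hs0, hs1, hne⟩ := h
  refine ⟨fun s u => ψ (H s u), hψ.comp_continuousOn hc, fun s hs u hu => hψU (hU s hs u hu),
    fun s hs => ?_, fun s hs => ?_, fun u hu => ?_, fun u hu => ?_,
    fun s hs u hu => hinj.ne (hne s hs u hu)⟩ <;> simp [*]

lemma trans {γ : ℝ → ℂ} (h₁ : GHomotopic U α β) (h₂ : GHomotopic U β γ) :
    GHomotopic U α γ := by
  obtain ⟨H₁, hc₁, hU₁, h0₁, h1₁, hs0₁, hs1₁, hne₁⟩ := h₁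
  obtain ⟨H₂, hc₂, hU₂, h0₂, h1₂, hs0₂, hs1₂, hne₂⟩ := h₂
  have hβ0 : β 0 = α 0 := by
    rw [← h1₁ 0 ⟨le_rfl, zero_le_one⟩, hs0₁ 1 ⟨zero_le_one, le_rfl⟩]
  have hβ1 : β 1 = α 1 := by
    rw [← h1₁ 1 ⟨zero_le_one, le_rfl⟩, hs1₁ 1 ⟨zero_le_one, le_rfl⟩]
  refine ⟨fun s => pathConcat (H₁ s) (H₂ s), continuousOn_pathConcat hc₁ hc₂ ?_,
    fun s hs => mapsTo_pathConcat (hU₁ s hs) (hU₂ s hs), fun s hs => by simp [h0₁ s hs],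
    fun s hs => by simp [h1₂ s hs], fun u hu => ?_, fun u hu => ?_, fun s hs => ?_⟩
  · exact fun s hs => (h1₁ s hs).trans (h0₂ s hs).symm
  · exact mapsTo_pathConcat (P := {α 0}) (hs0₁ · ·) (fun v hv => (hs0₂ v hv).trans hβ0) hu
  · exact mapsTo_pathConcat (P := {α 1}) (hs1₁ · ·) (fun v hv => (hs1₂ v hv).trans hβ1) hu
  · exact mapsTo_pathConcat (P := {z | z ≠ α 1}) (hne₁ s hs)
      (fun v hv => hβ1 ▸ hne₂ s hs v hv)

end GHomotopic

lemma IsAdmissible.gHomotopic_comp {U : Set ℂ} {β : ℝ → ℂ} {ρ : ℝ → ℝ} (hβ : IsAdmissible U β)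
    (hρ : ContinuousOn ρ (Icc 0 1)) (hρI : MapsTo ρ (Icc 0 1) (Icc 0 1)) (hρ0 : ρ 0 = 0)
    (hρ1 : ρ 1 = 1) (hρlt : ∀ s ∈ Ico 0 1, ρ s < 1) : GHomotopic U (β ∘ ρ) β := by
  obtain ⟨hβc, hβU, hβne⟩ := hβ
  set τ : ℝ × ℝ → ℝ := fun p => (1 - p.2) * ρ p.1 + p.2 * p.1
  have hτI : MapsTo τ (Icc 0 1 ×ˢ Icc 0 1) (Icc 0 1) := fun p hp => by
    simpa [τ, smul_eq_mul, sub_add_cancel] using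
      convex_Icc (0 : ℝ) 1 (hρI hp.1) hp.1 (sub_nonneg.2 hp.2.2) hp.2.1 (sub_add_cancel 1 p.2)
  refine ⟨fun s u => β (τ (s, u)), hβc.comp ?_ hτI, fun s hs u hu => hβU _ (hτI ⟨hs, hu⟩),
    fun s hs => by simp [τ], fun s hs => by simp [τ], fun u hu => by simp [τ, hρ0],
    fun u hu => by simp [τ, hρ1], fun s hs u hu => ?_⟩
  · exact ((continuous_const.sub continuous_snd).continuousOn.mul
      (hρ.comp continuous_fst.continuousOn fun p hp => hp.1)).add (by fun_prop)
  · show β (τ (s, u)) ≠ β (ρ 1)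
    rw [hρ1]
    refine hβne _ ⟨(hτI ⟨Ico_subset_Icc_self hs, hu⟩).1, ?_⟩
    have hmax : max (ρ s) s < 1 := max_lt (hρlt s hs) hs.2
    have h₁ := mul_le_mul_of_nonneg_left (le_max_left (ρ s) s) (sub_nonneg.2 hu.2)
    have h₂ := mul_le_mul_of_nonneg_left (le_max_right (ρ s) s) hu.1
    simp only [τ]
    linarith

lemma gHomotopic_pathConcat {U : Set ℂ} {L K : ℝ → ℝ → ℂ}
    (hL : ContinuousOn (fun p : ℝ × ℝ => L p.1 p.2) (Icc 0 1 ×ˢ Icc 0 1))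
    (hK : ContinuousOn (fun p : ℝ × ℝ => K p.1 p.2) (Icc 0 1 ×ˢ Icc 0 1))
    (hLU : ∀ s ∈ Icc (0 : ℝ) 1, ∀ u ∈ Icc (0 : ℝ) 1, L s u ∈ U)
    (hKU : ∀ s ∈ Icc (0 : ℝ) 1, ∀ u ∈ Icc (0 : ℝ) 1, K s u ∈ U)
    (hLK : ∀ u ∈ Icc (0 : ℝ) 1, L 1 u = K 0 u)
    (hL0 : ∀ u ∈ Icc (0 : ℝ) 1, L 0 u = L 0 0) (hK1 : ∀ u ∈ Icc (0 : ℝ) 1, K 1 u = K 1 0)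
    (hLne : ∀ s ∈ Icc (0 : ℝ) 1, ∀ u ∈ Icc (0 : ℝ) 1, L s u ≠ K 1 0)
    (hKne : ∀ s ∈ Ico (0 : ℝ) 1, ∀ u ∈ Icc (0 : ℝ) 1, K s u ≠ K 1 0) :
    GHomotopic U (pathConcat (L · 0) (K · 0)) (pathConcat (L · 1) (K · 1)) := by
  have swap {F : ℝ → ℝ → ℂ} (hF : ContinuousOn (fun p : ℝ × ℝ => F p.1 p.2) (Icc 0 1 ×ˢ Icc 0 1)) :
      ContinuousOn (fun p : ℝ × ℝ => F p.2 p.1) (Icc 0 1 ×ˢ Icc 0 1) :=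
    hF.comp continuous_swap.continuousOn fun p hp => ⟨hp.2, hp.1⟩
  refine ⟨fun s u => pathConcat (L · u) (K · u) s,
    swap (F := fun u s => pathConcat (L · u) (K · u) s)
      (continuousOn_pathConcat (δ := fun u s => L s u) (γ := fun u s => K s u)
        (swap hL) (swap hK) hLK),
    fun s hs u hu => mapsTo_pathConcat (fun v hv => hLU v hv u hu) (fun v hv => hKU v hv u hu) hs,
    fun s hs => rfl, fun s hs => rfl, fun u hu => by simp [hL0 u hu],
    fun u hu => by simp [hK1 u hu], fun s hs u hu => ?_⟩
  simpa using mapsTo_pathConcat_Ico (P := {z | z ≠ K 1 0}) (fun v hv => hLne v hv u hu)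
    (fun v hv => hKne v hv u hu) hs

/-- If `β t - z₁ = (γ t - z₁) * exp w`, then as `v` runs over `[0,1]` the point
`z₁ + (γ t - z₁) * blend l v w` moves from `γ t` to `β t`: along the segment when `l = 0`, and
along a logarithmic spiral around `z₁` when `l = 1`. -/
noncomputable def blend (l v : ℝ) (w : ℂ) : ℂ :=
  (1 - l) • ((1 - v) • 1 + v • exp w) + l • exp (v • w)

@[simp] lemma blend_time_zero (l : ℝ) (w : ℂ) : blend l 0 w = 1 := by
  simp [blend]

lemma blend_time_one (l : ℝ) (w : ℂ) : blend l 1 w = exp w := by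
  simp only [blend, sub_self, zero_smul, one_smul, zero_add, ← add_smul, sub_add_cancel]

lemma blend_weight_zero (v : ℝ) (w : ℂ) : blend 0 v w = (1 - v) • 1 + v • exp w := by
  simp [blend]

lemma blend_weight_one (v : ℝ) (w : ℂ) : blend 1 v w = exp (v • w) := by
  simp [blend]

lemma blend_mem {C : Set ℂ} (hC : Convex ℝ C) {l v : ℝ} {w : ℂ} (hl : l ∈ Icc (0 : ℝ) 1)
    (hv : v ∈ Icc (0 : ℝ) 1) (h1 : 1 ∈ C) (hw : exp w ∈ C) (hvw : exp (v • w) ∈ C) :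
    blend l v w ∈ C :=
  hC (hC h1 hw (sub_nonneg.2 hv.2) hv.1 (sub_add_cancel 1 v)) hvw (sub_nonneg.2 hl.2) hl.1
    (sub_add_cancel 1 l)

lemma norm_blend_le {l v : ℝ} (w : ℂ) (hl : l ∈ Icc (0 : ℝ) 1) (hv : v ∈ Icc (0 : ℝ) 1) :
    ‖blend l v w‖ ≤ max 1 ‖exp w‖ := by
  have hvw : ‖exp (v • w)‖ ≤ max 1 ‖exp w‖ := by
    rw [norm_exp, norm_exp, smul_re, smul_eq_mul]
    rcases le_total w.re 0 with h | h
    · exact (Real.exp_le_one_iff.2 (mul_nonpos_of_nonneg_of_nonpos hv.1 h)).trans (le_max_left _ _)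
    · exact (Real.exp_le_exp.2 (mul_le_of_le_one_left h hv.2)).trans (le_max_right _ _)
  simpa using blend_mem (convex_closedBall (0 : ℂ) (max 1 ‖exp w‖)) hl hv (by simp) (by simp)
    (by simpa using hvw)

lemma re_exp_pos {z : ℂ} (hz : |z.im| < Real.pi / 2) : 0 < (exp z).re := by
  rw [exp_re]
  exact mul_pos (Real.exp_pos _) (Real.cos_pos_of_mem_Ioo (abs_lt.1 hz))

lemma re_blend_pos {l v : ℝ} {w : ℂ} (hl : l ∈ Icc (0 : ℝ) 1) (hv : v ∈ Icc (0 : ℝ) 1)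
    (hw : |w.im| < Real.pi / 2) : 0 < (blend l v w).re := by
  refine blend_mem (convex_halfSpace_re_gt 0) hl hv (by simp) (re_exp_pos hw) (re_exp_pos ?_)
  rw [smul_im, smul_eq_mul, abs_mul, abs_of_nonneg hv.1]
  exact (mul_le_of_le_one_left (abs_nonneg _) hv.2).trans_lt hw

lemma continuous_blend : Continuous fun q : ℝ × ℝ × ℂ => blend q.1 q.2.1 q.2.2 := by
  unfold blend
  fun_prop

lemma exists_continuousOn_log_ratio {γ β : ℝ → ℂ} {z : ℂ} {t₁ : ℝ}
    (hγ : ContinuousOn γ (Icc 0 1)) (hβ : ContinuousOn β (Icc 0 1))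
    (hγne : ∀ t ∈ Ico (0 : ℝ) 1, γ t ≠ z) (hβne : ∀ t ∈ Ico (0 : ℝ) 1, β t ≠ z)
    (ht₁ : t₁ ∈ Ico (0 : ℝ) 1)
    (hnear : ∀ t ∈ Icc 0 t₁, ‖β t - γ t‖ < ‖γ t - z‖) :
    ∃ D : ℝ → ℂ, ContinuousOn D (Ico 0 1) ∧
      (∀ t ∈ Ico (0 : ℝ) 1, β t - z = (γ t - z) * exp (D t)) ∧
      ∀ t ∈ Icc 0 t₁, |(D t).im| < Real.pi / 2 := by
  set R : ℝ → ℂ := fun t => (β t - z) / (γ t - z)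
  have hγz : ∀ t ∈ Ico (0 : ℝ) 1, γ t - z ≠ 0 := fun t ht => sub_ne_zero.2 (hγne t ht)
  have hR : ContinuousOn R (Ico 0 1) :=
    ((hβ.mono Ico_subset_Icc_self).sub continuousOn_const).div
      ((hγ.mono Ico_subset_Icc_self).sub continuousOn_const) hγz
  have hR0 : ∀ t ∈ Ico (0 : ℝ) 1, R t ≠ 0 := fun t ht =>
    div_ne_zero (sub_ne_zero.2 (hβne t ht)) (hγz t ht)
  have hmax : MapsTo (fun t : ℝ => max t 0) (Iio 1) (Ico 0 1) :=
    fun t ht => ⟨le_max_right _ _, max_lt ht one_pos⟩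
  -- lift on the open convex set `Iio 1`, where `R (max t 0)` extends `R`
  obtain ⟨D, hDc, hDexp, hD0⟩ := (convex_Iio (1 : ℝ)).exists_continuousOn_exp_lift isOpen_Iio
    (hR.comp (by fun_prop) hmax) (fun t ht => hR0 _ (hmax ht)) (a := 0) (mem_Iio.2 one_pos)
    (e := log (R 0)) (by simpa using exp_log (hR0 0 ⟨le_rfl, one_pos⟩))
  have hDR : ∀ t ∈ Ico (0 : ℝ) 1, exp (D t) = R t := fun t ht => by
    simpa [max_eq_left ht.1] using hDexp t ht.2
  have hsub : Icc 0 t₁ ⊆ Ico (0 : ℝ) 1 := fun t ht => ⟨ht.1, ht.2.trans_lt ht₁.2⟩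
  have hRre : ∀ t ∈ Icc 0 t₁, 0 < (R t).re := fun t ht => by
    have hR1 : ‖R t - 1‖ < 1 := by
      rw [div_sub_one (hγz t (hsub ht)), sub_sub_sub_cancel_right, norm_div,
        div_lt_one (norm_pos_iff.2 (hγz t (hsub ht)))]
      exact hnear t ht
    have := (abs_re_le_norm (R t - 1)).trans_lt hR1
    rw [sub_re, one_re, abs_lt] at this
    linarith
  have hDlog : EqOn D (fun t => log (R t)) (Icc 0 t₁) :=
    eqOn_of_exp_comp_eqOn isPreconnected_Icc (hDc.mono fun t ht => (hsub ht).2)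
      (ContinuousOn.clog (hR.mono hsub) fun t ht => .inl (hRre t ht))
      (fun t ht => by rw [hDR t (hsub ht), exp_log (hR0 t (hsub ht))])
      ⟨le_rfl, ht₁.1⟩ (by simpa using hD0)
  refine ⟨D, hDc.mono fun t ht => ht.2, fun t ht => ?_, fun t ht => ?_⟩
  · rw [hDR t ht, mul_div_cancel₀ _ (hγz t ht)]
  · rw [hDlog ht, log_im]
    exact abs_arg_lt_pi_div_two_iff.2 (.inl (hRre t ht))

noncomputable def blendHomotopy (γ D : ℝ → ℂ) (l : ℝ → ℝ) (t v : ℝ) : ℂ :=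
  γ 1 + (γ t - γ 1) * blend (l t) v (D t)

section blendHomotopy

variable {γ β D : ℝ → ℂ} {l : ℝ → ℝ} {t v : ℝ}

@[simp] lemma blendHomotopy_zero_right : blendHomotopy γ D l t 0 = γ t := by
  simp [blendHomotopy]

@[simp] lemma blendHomotopy_one_left : blendHomotopy γ D l 1 v = γ 1 := by
  simp [blendHomotopy]

lemma blendHomotopy_one_right (hDβ : ∀ t ∈ Ico (0 : ℝ) 1, β t - γ 1 = (γ t - γ 1) * exp (D t))
    (hβ1 : β 1 = γ 1) (ht : t ∈ Icc (0 : ℝ) 1) : blendHomotopy γ D l t 1 = β t := by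
  rcases ht.2.lt_or_eq with ht1 | rfl
  · simp only [blendHomotopy, blend_time_one]
    linear_combination -(hDβ t ⟨ht.1, ht1⟩)
  · rw [blendHomotopy_one_left, hβ1]

lemma blendHomotopy_eq_segment (hDβ : β t - γ 1 = (γ t - γ 1) * exp (D t)) (hl : l t = 0) :
    blendHomotopy γ D l t v = (1 - v) • γ t + v • β t := by
  simp only [blendHomotopy, hl, blend_weight_zero, Complex.real_smul, mul_one, ofReal_sub,
    ofReal_one]
  linear_combination -(v : ℂ) * hDβ

lemma norm_blendHomotopy_sub_le
    (hDβ : ∀ t ∈ Ico (0 : ℝ) 1, β t - γ 1 = (γ t - γ 1) * exp (D t))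
    (hl : ∀ t, l t ∈ Icc (0 : ℝ) 1) (ht : t ∈ Icc (0 : ℝ) 1) (hv : v ∈ Icc (0 : ℝ) 1) :
    ‖blendHomotopy γ D l t v - γ 1‖ ≤ max ‖γ t - γ 1‖ ‖β t - γ 1‖ := by
  rcases ht.2.lt_or_eq with ht1 | rfl
  · rw [hDβ t ⟨ht.1, ht1⟩, norm_mul, ← mul_one ‖γ t - γ 1‖, mul_assoc, one_mul,
      ← mul_max_of_nonneg _ _ (norm_nonneg _)]
    simpa only [blendHomotopy, add_sub_cancel_left, norm_mul] using
      mul_le_mul_of_nonneg_left (norm_blend_le (D t) (hl t) hv) (norm_nonneg _)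
  · simp

lemma continuousOn_blendHomotopy (hγ : ContinuousOn γ (Icc 0 1))
    (hβ : ContinuousOn β (Icc 0 1)) (hβ1 : β 1 = γ 1) (hD : ContinuousOn D (Ico 0 1))
    (hDβ : ∀ t ∈ Ico (0 : ℝ) 1, β t - γ 1 = (γ t - γ 1) * exp (D t)) (hl : Continuous l)
    (hlI : ∀ t, l t ∈ Icc (0 : ℝ) 1) :
    ContinuousOn (fun p : ℝ × ℝ => blendHomotopy γ D l p.1 p.2) (Icc 0 1 ×ˢ Icc 0 1) := by
  intro p hp
  have hγS : ContinuousOn (fun q : ℝ × ℝ => γ q.1) (Icc 0 1 ×ˢ Icc 0 1) :=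
    hγ.comp continuous_fst.continuousOn fun q hq => hq.1
  rcases hp.1.2.lt_or_eq with hp1 | hp1
  · have hblend : ContinuousOn (fun q : ℝ × ℝ => blend (l q.1) q.2 (D q.1))
        (Ico 0 1 ×ˢ Icc 0 1) :=
      continuous_blend.comp_continuousOn (f := fun q : ℝ × ℝ => (l q.1, q.2, D q.1))
        ((hl.comp continuous_fst).continuousOn.prodMk (continuous_snd.continuousOn.prodMk
          (hD.comp continuous_fst.continuousOn fun q hq => hq.1)))
    have hKc : ContinuousOn (fun q : ℝ × ℝ => blendHomotopy γ D l q.1 q.2)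
        (Ico 0 1 ×ˢ Icc 0 1) :=
      continuousOn_const.add (((hγS.mono (prod_mono Ico_subset_Icc_self subset_rfl)).sub
        continuousOn_const).mul hblend)
    rw [← continuousWithinAt_inter ((isOpen_lt continuous_fst continuous_const).mem_nhds hp1)]
    exact (hKc.mono fun q hq => ⟨⟨hq.1.1.1, hq.2⟩, hq.1.2⟩) p ⟨hp, hp1⟩
  · have hβS : ContinuousOn (fun q : ℝ × ℝ => β q.1) (Icc 0 1 ×ˢ Icc 0 1) :=
      hβ.comp continuous_fst.continuousOn fun q hq => hq.1
    have hb : ContinuousOn (fun q : ℝ × ℝ => max ‖γ q.1 - γ 1‖ ‖β q.1 - γ 1‖)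
        (Icc 0 1 ×ˢ Icc 0 1) :=
      ((hγS.sub continuousOn_const).norm).sup (hβS.sub continuousOn_const).norm
    refine continuousWithinAt_of_norm_sub_le (hb p hp) (by simp [hp1, hβ1]) fun q hq => ?_
    rw [hp1, blendHomotopy_one_left]
    exact norm_blendHomotopy_sub_le hDβ hlI hq.1 hq.2

end blendHomotopy

theorem exists_homotopy_of_near {U : Set ℂ} {γ β : ℝ → ℂ} {d η t₀ t₁ : ℝ}
    (hγ : ContinuousOn γ (Icc 0 1)) (hβ : ContinuousOn β (Icc 0 1)) (hβ1 : β 1 = γ 1)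
    (hγne : ∀ t ∈ Ico (0 : ℝ) 1, γ t ≠ γ 1) (hβne : ∀ t ∈ Ico (0 : ℝ) 1, β t ≠ γ 1)
    (ht₀ : 0 ≤ t₀) (ht₀₁ : t₀ < t₁) (ht₁ : t₁ < 1)
    (hball : ∀ t ∈ Icc (0 : ℝ) 1, ball (γ t) d ⊆ U) (hβγ : ∀ t ∈ Icc (0 : ℝ) 1, ‖β t - γ t‖ < η)
    (hend : ∀ t ∈ Icc t₀ 1, ‖γ t - γ 1‖ + η < d) (hnear : ∀ t ∈ Icc 0 t₁, η < ‖γ t - γ 1‖) :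
    ∃ K : ℝ → ℝ → ℂ, ContinuousOn (fun p : ℝ × ℝ => K p.1 p.2) (Icc 0 1 ×ˢ Icc 0 1) ∧
      (∀ t ∈ Icc (0 : ℝ) 1, ∀ v ∈ Icc (0 : ℝ) 1, K t v ∈ U) ∧
      (∀ t ∈ Icc (0 : ℝ) 1, K t 0 = γ t) ∧ (∀ t ∈ Icc (0 : ℝ) 1, K t 1 = β t) ∧
      (∀ v, K 0 v = (1 - v) • γ 0 + v • β 0) ∧ (∀ v, K 1 v = γ 1) ∧
      (∀ t ∈ Ico (0 : ℝ) 1, ∀ v ∈ Icc (0 : ℝ) 1, K t v ≠ γ 1) := by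
  obtain ⟨D, hDc, hDβ, hDim⟩ := exists_continuousOn_log_ratio hγ hβ hγne hβne
    ⟨ht₀.trans ht₀₁.le, ht₁⟩ fun t ht => (hβγ t ⟨ht.1, ht.2.trans ht₁.le⟩).trans (hnear t ht)
  obtain ⟨l, hl0, hl1, hlI⟩ := exists_continuous_zero_one_of_isClosed isClosed_Iic isClosed_Ici
    (Iic_disjoint_Ici.2 (not_le.2 ht₀₁))
  have hseg : ∀ t ∈ Icc 0 t₀, ∀ v, blendHomotopy γ D l t v = (1 - v) • γ t + v • β t :=
    fun t ht v => blendHomotopy_eq_segment (hDβ t ⟨ht.1, (ht.2.trans_lt ht₀₁).trans ht₁⟩) (hl0 ht.2)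
  refine ⟨blendHomotopy γ D l, continuousOn_blendHomotopy hγ hβ hβ1 hDc hDβ l.continuous hlI,
    fun t ht v hv => ?_, fun t _ => blendHomotopy_zero_right,
    fun t ht => blendHomotopy_one_right hDβ hβ1 ht, hseg 0 ⟨le_rfl, ht₀⟩,
    fun v => blendHomotopy_one_left, fun t ht v hv => ?_⟩
  · have hηd : η < d := by simpa using hend 1 ⟨(ht₀₁.trans ht₁).le, le_rfl⟩
    have hη : 0 < η := (norm_nonneg _).trans_lt (hβγ t ht)
    rcases le_total t t₀ with h | h
    · rw [hseg t ⟨ht.1, h⟩ v]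
      refine hball t ht ((convex_ball (γ t) d).segment_subset (mem_ball_self (hη.trans hηd))
        (mem_ball_iff_norm.2 ((hβγ t ht).trans hηd)) ?_)
      exact ⟨1 - v, v, sub_nonneg.2 hv.2, hv.1, sub_add_cancel 1 v, rfl⟩
    · have := norm_sub_le_norm_sub_add_norm_sub (β t) (γ t) (γ 1)
      refine hball 1 ⟨zero_le_one, le_rfl⟩ (mem_ball_iff_norm.2 ?_)
      refine (norm_blendHomotopy_sub_le hDβ hlI ht hv).trans_lt (max_lt ?_ ?_) <;>
        linarith [hβγ t ht, hend t ⟨h, ht.2⟩]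
  · have hblend : blend (l t) v (D t) ≠ 0 := by
      rcases le_total t t₁ with h | h
      · intro h0
        simpa [h0] using re_blend_pos (hlI t) hv (hDim t ⟨ht.1, h⟩)
      · rw [hl1 h, Pi.one_apply, blend_weight_one]
        exact exp_ne_zero _
    simpa [blendHomotopy] using mul_ne_zero (sub_ne_zero.2 (hγne t ht)) hblend

theorem gHomotopic_pathConcat_of_near {U : Set ℂ} {γ β δ : ℝ → ℂ} {d η t₀ t₁ r : ℝ}
    (hγ : IsAdmissible U γ) (hβ : IsAdmissible U β) (hβ1 : β 1 = γ 1)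
    (ht₀ : 0 ≤ t₀) (ht₀₁ : t₀ < t₁) (ht₁ : t₁ < 1)
    (hball : ∀ t ∈ Icc (0 : ℝ) 1, ball (γ t) d ⊆ U) (hβγ : ∀ t ∈ Icc (0 : ℝ) 1, ‖β t - γ t‖ < η)
    (hend : ∀ t ∈ Icc t₀ 1, ‖γ t - γ 1‖ + η < d) (hnear : ∀ t ∈ Icc 0 t₁, η < ‖γ t - γ 1‖)
    (hδ : ContinuousOn δ (Icc 0 1)) (hδ0 : δ 0 = β 0) (hδ1 : δ 1 = γ 0)
    (hδr : ∀ s ∈ Icc (0 : ℝ) 1, δ s ∈ ball (γ 0) r) (hrU : ball (γ 0) r ⊆ U)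
    (hr : γ 1 ∉ ball (γ 0) r) :
    GHomotopic U (pathConcat δ γ) β := by
  obtain ⟨K, hKc, hKU, hK0, hK1, hK0v, hK1v, hKne⟩ := exists_homotopy_of_near hγ.1 hβ.1 hβ1
    hγ.2.2 (hβ1 ▸ hβ.2.2) ht₀ ht₀₁ ht₁ hball hβγ hend hnear
  set L : ℝ → ℝ → ℂ := fun s u => (1 - u) • δ s + u • β 0
  have hL : ∀ s ∈ Icc (0 : ℝ) 1, ∀ u ∈ Icc (0 : ℝ) 1, L s u ∈ ball (γ 0) r := fun s hs u hu =>
    convex_ball _ _ (hδr s hs) (hδ0 ▸ hδr 0 ⟨le_rfl, zero_le_one⟩) (sub_nonneg.2 hu.2) hu.1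
      (sub_add_cancel 1 u)
  have hLc : ContinuousOn (fun p : ℝ × ℝ => L p.1 p.2) (Icc 0 1 ×ˢ Icc 0 1) :=
    ((continuous_const.sub continuous_snd).continuousOn.smul
      (hδ.comp continuous_fst.continuousOn fun p hp => hp.1)).add (by fun_prop)
  have hcontract := gHomotopic_pathConcat hLc hKc (fun s hs u hu => hrU (hL s hs u hu)) hKU
    (fun u _ => by simp only [L, hK0v, hδ1])
    (fun u _ => by simp only [L, hδ0, ← add_smul, sub_add_cancel])
    (fun u _ => by rw [hK1v, hK1v])
    (fun s hs u hu => by rw [hK1v]; exact ne_of_mem_of_not_mem (hL s hs u hu) hr)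
    (fun s hs u hu => by rw [hK1v]; exact hKne s hs u hu)
  have hreparam := hβ.gHomotopic_comp (ρ := fun s => max 0 (2 * s - 1)) (by fun_prop)
    (fun s hs => ⟨le_max_left _ _, max_le zero_le_one (by linarith [hs.2])⟩) (by norm_num)
    (by norm_num) fun s hs => max_lt one_pos (by linarith [hs.2])
  refine (hcontract.congr_left (EqOn.pathConcat (fun s _ => by simp [L]) hK0)).trans
    (hreparam.congr_left fun s hs => ?_)
  simp only [Function.comp_apply, _root_.pathConcat]
  split_ifs with h
  · simp [L, max_eq_left (by linarith : 2 * s - 1 ≤ 0)]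
  · rw [max_eq_right (by linarith), hK1 _ ⟨by linarith, by linarith [hs.2]⟩]

lemma GHomotopic.pathConcat_of_homeomorph {U : Set ℂ} {δ γ γ' : ℝ → ℂ} (ψ : ℂ ≃ₜ ℂ)
    (hψU : MapsTo ψ U U) (hψδ : ∀ s ∈ Icc (0 : ℝ) 1, ψ (δ s) = δ s)
    (h : GHomotopic U (pathConcat δ γ) (ψ.symm ∘ γ')) :
    GHomotopic U (pathConcat δ (ψ ∘ γ)) γ' := by
  have h' := h.map ψ.continuous ψ.injective hψU
  rw [comp_pathConcat, ← Function.comp_assoc, ψ.self_comp_symm, Function.id_comp] at h'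
  exact h'.congr_left (EqOn.pathConcat hψδ fun _ _ => rfl)

section fixedOff

variable {f : ℂ → ℂ} {S : Set ℂ}

lemma Function.Injective.eq_self_or_mem (hf : Function.Injective f) (hS : ∀ z ∉ S, f z = z)
    (z : ℂ) : f z = z ∨ z ∈ S ∧ f z ∈ S := by
  by_cases hz : z ∈ S
  · refine .inr ⟨hz, by_contra fun hfz => hfz ?_⟩
    rwa [hf (hS _ hfz)]
  · exact .inl (hS z hz)

lemma Function.Injective.mapsTo_of_eq_self_off (hf : Function.Injective f) {U : Set ℂ}
    (hS : ∀ z ∉ S, f z = z) (hSU : S ⊆ U) : MapsTo f U U := fun z hz =>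
  (hf.eq_self_or_mem hS z).elim (fun h => h.symm ▸ hz) fun h => hSU h.2

lemma Function.Injective.norm_sub_lt_of_eq_self_off_ball (hf : Function.Injective f) {c : ℂ}
    {ε : ℝ} (hε : 0 < ε) (hS : ∀ z ∉ ball c ε, f z = z) (z : ℂ) : ‖f z - z‖ < 2 * ε := by
  rcases hf.eq_self_or_mem hS z with h | ⟨h₁, h₂⟩
  · simp [h, hε]
  · rw [mem_ball] at h₁ h₂
    linarith [dist_eq_norm (f z) z, dist_triangle_right (f z) z c]

end fixedOff

lemma exists_norm_sub_lt_on_Icc {γ : ℝ → ℂ} (hγ : ContinuousOn γ (Icc 0 1)) {r : ℝ} (hr : 0 < r) :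
    ∃ t₀ ∈ Ico (0 : ℝ) 1, ∀ t ∈ Icc t₀ 1, ‖γ t - γ 1‖ < r := by
  have h := (hγ 1 ⟨zero_le_one, le_rfl⟩).eventually (ball_mem_nhds (γ 1) hr)
  rw [nhdsWithin_Icc_eq_nhdsLE zero_lt_one] at h
  obtain ⟨l, hl, hsub⟩ := mem_nhdsLE_iff_exists_Icc_subset.1 h
  exact ⟨max l 0, ⟨le_max_right _ _, max_lt hl one_pos⟩, fun t ht =>
    mem_ball_iff_norm.1 (hsub ⟨(le_max_left _ _).trans ht.1, ht.2⟩)⟩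

lemma exists_pos_le_norm_sub {γ : ℝ → ℂ} (hγ : ContinuousOn γ (Icc 0 1))
    (hne : ∀ t ∈ Ico (0 : ℝ) 1, γ t ≠ γ 1) {t₁ : ℝ} (ht₁ : t₁ ∈ Ico (0 : ℝ) 1) :
    ∃ c > 0, ∀ t ∈ Icc 0 t₁, c ≤ ‖γ t - γ 1‖ := by
  have hsub : Icc 0 t₁ ⊆ Ico (0 : ℝ) 1 := fun t ht => ⟨ht.1, ht.2.trans_lt ht₁.2⟩
  obtain ⟨tc, htc, hmin⟩ := isCompact_Icc.exists_isMinOn ⟨0, le_rfl, ht₁.1⟩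
    ((hγ.mono (hsub.trans Ico_subset_Icc_self)).sub continuousOn_const).norm
  exact ⟨_, norm_pos_iff.2 (sub_ne_zero.2 (hne tc (hsub htc))), fun t ht => hmin ht⟩

-- `3 * ε` will bound `‖ψ⁻¹ (γ' t) - γ t‖`: `ε` from `γ` to `γ'`, and `2 * ε` because `ψ⁻¹`
-- moves points only inside `B(γ 1, ε)`.
lemma IsAdmissible.exists_scales {U : Set ℂ} (hU : IsOpen U) {γ : ℝ → ℂ}
    (hγ : IsAdmissible U γ) (hne : γ 0 ≠ γ 1) :
    ∃ d ε t₀ t₁ : ℝ, 0 < ε ∧ 0 ≤ t₀ ∧ t₀ < t₁ ∧ t₁ < 1 ∧ 2 * ε < ‖γ 0 - γ 1‖ ∧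
      (∀ s ∈ Icc (0 : ℝ) 1, ball (γ s) d ⊆ U) ∧
      (∀ t ∈ Icc t₀ 1, ‖γ t - γ 1‖ + 3 * ε < d) ∧ (∀ t ∈ Icc 0 t₁, 3 * ε < ‖γ t - γ 1‖) := by
  obtain ⟨d, hd, hdU⟩ := (isCompact_Icc.image_of_continuousOn hγ.1).exists_thickening_subset_open
    hU (image_subset_iff.2 hγ.2.1)
  obtain ⟨t₀, ht₀, hγt₀⟩ := exists_norm_sub_lt_on_Icc hγ.1 (div_pos hd four_pos)
  obtain ⟨c, hc, hγc⟩ := exists_pos_le_norm_sub hγ.1 hγ.2.2 (t₁ := (t₀ + 1) / 2)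
    ⟨by linarith [ht₀.1], by linarith [ht₀.2]⟩
  have hsep := norm_pos_iff.2 (sub_ne_zero.2 hne)
  set m := min (min d c) ‖γ 0 - γ 1‖
  have hmd : m ≤ d := (min_le_left _ _).trans (min_le_left _ _)
  have hmc : m ≤ c := (min_le_left _ _).trans (min_le_right _ _)
  have hm01 : m ≤ ‖γ 0 - γ 1‖ := min_le_right _ _
  have hm : 0 < m := lt_min (lt_min hd hc) hsep
  refine ⟨d, m / 4, t₀, (t₀ + 1) / 2, by positivity, ht₀.1, by linarith [ht₀.2],
    by linarith [ht₀.2], by linarith,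
    fun s hs => (ball_subset_thickening (mem_image_of_mem γ hs) d).trans hdU,
    fun t ht => by linarith [hγt₀ t ht], fun t ht => by linarith [hγc t ht]⟩

lemma ofReal_le_infEDist_compl {x : ℂ} {r : ℝ} {U : Set ℂ} (h : ball x r ⊆ U) :
    ENNReal.ofReal r ≤ Metric.infEDist x Uᶜ :=
  Metric.le_infEDist.2 fun y hy => by
    rw [edist_dist]
    exact ENNReal.ofReal_le_ofReal (not_lt.1 fun hxy => hy (h (mem_ball'.2 hxy)))

/-- Lemma GammaTop3: canonical representative of nearby homotopy classes. For ε small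
enough, any admissible path `γ'` at sup distance `< ε` from `γ` is 𝒢-homotopic to
`δ·(ψ∘γ)`, for any path `δ` in `B(γ 0, ε)` joining the new start point to `γ 0` and any
homeomorphism `ψ` of the plane, equal to the identity outside `B(γ 1, ε)`, sending
`γ 1` to the new end point. -/
theorem canonical_representative (U : Set ℂ) (hU : IsOpen U)
    (γ : ℝ → ℂ) (hγ : IsAdmissible U γ) (hne : γ 0 ≠ γ 1) :
    ∃ ε > (0:ℝ),
      (∀ s ∈ Set.Icc (0:ℝ) 1, ENNReal.ofReal ε < EMetric.infEdist (γ s) Uᶜ) ∧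
      ε < ‖γ 0 - γ 1‖ ∧
      ∀ γ' : ℝ → ℂ, IsAdmissible U γ' → pathDist γ γ' < ε →
        ∀ δ : ℝ → ℂ, ContinuousOn δ (Set.Icc 0 1) →
          (∀ s ∈ Set.Icc (0:ℝ) 1, δ s ∈ Metric.ball (γ 0) ε) →
          δ 0 = γ' 0 → δ 1 = γ 0 →
          ∀ ψ : ℂ ≃ₜ ℂ, (∀ z ∉ Metric.ball (γ 1) ε, ψ z = z) → ψ (γ 1) = γ' 1 →
            IsAdmissible U (pathConcat δ (fun s => ψ (γ s))) ∧
            GHomotopic U (pathConcat δ (fun s => ψ (γ s))) γ' := by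
  obtain ⟨d, ε, t₀, t₁, hε, ht₀, ht₀₁, ht₁, hsep, hball, hend, hnear⟩ := hγ.exists_scales hU hne
  have hεd : 3 * ε < d := by simpa using hend 1 ⟨(ht₀₁.trans ht₁).le, le_rfl⟩
  refine ⟨ε, hε, fun s hs => ((ENNReal.ofReal_lt_ofReal_iff (by linarith)).2 (by linarith)).trans_le
    (ofReal_le_infEDist_compl (hball s hs)), by linarith, ?_⟩
  intro γ' hγ' hdist δ hδ hδε hδ0 hδ1 ψ hψ hψ1
  have hγ'γ : ∀ t ∈ Icc (0 : ℝ) 1, ‖γ' t - γ t‖ < ε := fun t ht =>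
    (norm_sub_le_pathDist hγ.1 hγ'.1 ht).trans_lt hdist
  have hψ' : ∀ z ∉ ball (γ 1) ε, ψ.symm z = z := fun z hz => ψ.symm_apply_eq.2 (hψ z hz).symm
  have hεU : ball (γ 1) ε ⊆ U :=
    (ball_subset_ball (by linarith)).trans (hball 1 ⟨zero_le_one, le_rfl⟩)
  have hfar : Disjoint (ball (γ 0) ε) (ball (γ 1) ε) :=
    ball_disjoint_ball (by rw [dist_eq_norm]; linarith)
  set β := ψ.symm ∘ γ'
  have hβ : IsAdmissible U β :=
    hγ'.comp ψ.symm.continuous ψ.symm.injective (ψ.symm.injective.mapsTo_of_eq_self_off hψ' hεU)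
  have hβγ : ∀ t ∈ Icc (0 : ℝ) 1, ‖β t - γ t‖ < 3 * ε := fun t ht => by
    show ‖ψ.symm (γ' t) - γ t‖ < 3 * ε
    linarith [norm_sub_le_norm_sub_add_norm_sub (ψ.symm (γ' t)) (γ' t) (γ t),
      ψ.symm.injective.norm_sub_lt_of_eq_self_off_ball hε hψ' (γ' t), hγ'γ t ht]
  have hβ0 : δ 0 = β 0 := hδ0.trans
    (hψ' _ (disjoint_left.1 hfar (mem_ball_iff_norm.2 (hγ'γ 0 ⟨le_rfl, zero_le_one⟩)))).symm
  have hψU := ψ.injective.mapsTo_of_eq_self_off hψ hεU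
  have hψδ : ∀ s ∈ Icc (0 : ℝ) 1, ψ (δ s) = δ s := fun s hs =>
    hψ _ (disjoint_left.1 hfar (hδε s hs))
  have hfinal : GHomotopic U (pathConcat δ (ψ ∘ γ)) γ' := .pathConcat_of_homeomorph ψ hψU hψδ <|
    gHomotopic_pathConcat_of_near hγ hβ (by simp [← hψ1]) ht₀ ht₀₁ ht₁ hball hβγ hend hnear
      hδ hβ0 hδ1 hδε ((ball_subset_ball (by linarith)).trans (hball 0 ⟨le_rfl, zero_le_one⟩))
      fun h => disjoint_left.1 hfar h (mem_ball_self hε)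
  exact ⟨hfinal.isAdmissible_left, hfinal⟩
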